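/- For each index i ∈ {1,…,r}, the group algebra ℤ[Λ] decomposes as the internal direct sum ℤ[Λ] = ℤ[Λ]^{⟨s_i⟩} ⊕ e^{ω_i} · ℤ[Λ]^{⟨s_i⟩} of ℤ[Λ]^{⟨s_i⟩}-submodules, where ℤ[Λ]^{⟨s_i⟩} denotes the subring of elements fixed by the simple reflection s_i. -/

import Mathlib

/-! Write `s = s_i` and `t = e^{ω_i}`. Since `t² = (t + s t) t - t · s t` and
`t⁻¹ = (t⁻¹ · s t⁻¹) · s t` with `s`-invariant coefficients, `ℤ[Λ]^s + t ℤ[Λ]^s` is a subring;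
it contains `t^{±1}` and every `e^μ` with `⟨μ, α_i^∨⟩ = 0`, hence every
`e^λ = e^{λ - ⟨λ, α_i^∨⟩ ω_i} t^{⟨λ, α_i^∨⟩}`. For uniqueness, applying `s` to `a + t b = 0` gives
`(t - s t) b = 0`, and `t - s t = e^{ω_i - α_i} (e^{α_i} - 1)` is a non-zero-divisor because
`α_i` has infinite order in `Λ`. -/

open scoped Classical

noncomputable section

/-- The lattice `Λ = Λ₀ ⊕ Λ_ss`, where `Λ_ss = Fin r →₀ ℤ` is the weight lattice of the
root system, with the fundamental weights `ω_1, …, ω_r` as standard basis, and `Λ₀` is a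
lattice on which the Weyl group acts trivially. -/
abbrev Lam (r : ℕ) (Λ₀ : Type) := Λ₀ × (Fin r →₀ ℤ)

/-- The fundamental weight `ω_i`, viewed in `Λ`. -/
def omega (r : ℕ) (Λ₀ : Type) [AddCommGroup Λ₀] (i : Fin r) : Lam r Λ₀ :=
  (0, Finsupp.single i 1)

/-- The group algebra `ℤ[Λ]`. -/
abbrev GA (r : ℕ) (Λ₀ : Type) [AddCommGroup Λ₀] := AddMonoidAlgebra ℤ (Lam r Λ₀)

/-- The basis element `e^λ` of the group algebra `ℤ[Λ]`. -/
def eL {r : ℕ} {Λ₀ : Type} [AddCommGroup Λ₀] (l : Lam r Λ₀) : GA r Λ₀ :=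
  AddMonoidAlgebra.single l 1

/-- The data of a reduced crystallographic root system `Φ` of rank `r`, with Weyl group `W`
(a Coxeter group on the simple reflections `s_1, …, s_r`), acting on the lattice
`Λ = Λ₀ ⊕ Λ_ss` (trivially on `Λ₀`), where `Λ_ss = Fin r →₀ ℤ` is the weight lattice with
the fundamental weights as basis.  The simple root `α_i` is recorded by its coordinates in
the basis of fundamental weights, that is, `α i j = ⟨α_i, α_j^∨⟩` is the `(j,i)` entry of
the Cartan matrix; the simple reflection acts by `s_i(λ) = λ − ⟨λ, α_i^∨⟩ α_i`. -/
structure WeylSetup (r : ℕ) (Λ₀ : Type) [AddCommGroup Λ₀] (W : Type) [Group W] where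
  /-- The Coxeter matrix of the Weyl group. -/
  M : CoxeterMatrix (Fin r)
  /-- `W` is a Coxeter group with simple reflections `s_1, …, s_r`. -/
  cs : CoxeterSystem M W
  /-- The simple roots, in fundamental-weight coordinates: `α i j = ⟨α_i, α_j^∨⟩`. -/
  α : Fin r → (Fin r →₀ ℤ)
  /-- `⟨α_i, α_i^∨⟩ = 2`. -/
  α_self : ∀ i, α i i = 2
  /-- Off-diagonal Cartan entries are nonpositive. -/
  α_off : ∀ i j, i ≠ j → α i j ≤ 0
  /-- Vanishing of Cartan entries is symmetric. -/
  α_zero_iff : ∀ i j, α i j = 0 ↔ α j i = 0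
  /-- The action of `W` on `Λ` (by automorphisms of the additive group). -/
  ρ : W →* Multiplicative (AddAut (Lam r Λ₀))
  /-- The simple reflection `s_i` acts trivially on `Λ₀` and by
  `λ ↦ λ − ⟨λ, α_i^∨⟩ α_i` on the weight lattice. -/
  ρ_simple : ∀ (i : Fin r) (x : Lam r Λ₀), Multiplicative.toAdd (ρ (cs.simple i)) x = (x.1, x.2 - x.2 i • α i)
  /-- The Weyl group acts faithfully on the weight lattice. -/
  faithful : Function.Injective ρ

namespace WeylSetup

variable {r : ℕ} {Λ₀ W : Type} [AddCommGroup Λ₀] [Group W]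

/-- The induced action of `w ∈ W` on the group algebra `ℤ[Λ]`, `e^λ ↦ e^{wλ}`. -/
def act (S : WeylSetup r Λ₀ W) (w : W) : GA r Λ₀ →+* GA r Λ₀ :=
  AddMonoidAlgebra.mapDomainRingHom ℤ (Multiplicative.toAdd (S.ρ w)).toAddMonoidHom

/-- The invariant subring `ℤ[Λ]^H` of the group algebra under a set `H` of elements of `W`
(e.g. a subgroup). -/
def inv (S : WeylSetup r Λ₀ W) (H : Set W) : Subring (GA r Λ₀) where
  carrier := {x : GA r Λ₀ | ∀ w ∈ H, S.act w x = x}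
  one_mem' := fun w _ => map_one (S.act w)
  mul_mem' := fun {x y} hx hy w hw => by rw [map_mul, hx w hw, hy w hw]
  add_mem' := fun {x y} hx hy w hw => by rw [map_add, hx w hw, hy w hw]
  zero_mem' := fun w _ => map_zero (S.act w)
  neg_mem' := fun {x} hx w hw => by rw [map_neg, hx w hw]

/-- The standard parabolic subgroup `W_I` generated by the simple reflections `s_i`, `i ∈ I`. -/
def WI (S : WeylSetup r Λ₀ W) (I : Finset (Fin r)) : Subgroup W :=
  Subgroup.closure (S.cs.simple '' (I : Set (Fin r)))

/-- The set `W^I` of minimal length coset representatives of `W_I`: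
`W^I = {w ∈ W : ℓ(w s_i) > ℓ(w) for all i ∈ I}`. -/
def Wmin (S : WeylSetup r Λ₀ W) (I : Finset (Fin r)) : Set W :=
  {w : W | ∀ i ∈ I, S.cs.length (w * S.cs.simple i) > S.cs.length w}

/-- `λ_v := Σ ω_i`, the sum over those `i` with `ℓ(s_i v) < ℓ(v)`
(equivalently, `v⁻¹ α_i < 0`). -/
def lamv (S : WeylSetup r Λ₀ W) (v : W) : Lam r Λ₀ :=
  ∑ i ∈ Finset.univ.filter (fun i : Fin r => S.cs.IsLeftDescent v i), omega r Λ₀ i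

/-- The Steinberg element `f_v^I := Σ_{μ ∈ W_I·(v⁻¹ λ_v)} e^μ ∈ ℤ[Λ]^{W_I}`, the sum over
the `W_I`-orbit of `v⁻¹ λ_v` in `Λ` (defined for `v ∈ W^I`). -/
def steinberg [Finite W] (S : WeylSetup r Λ₀ W) (I : Finset (Fin r)) (v : W) : GA r Λ₀ :=
  letI : Fintype W := Fintype.ofFinite W
  ∑ μ ∈ Finset.image (fun w : W => Multiplicative.toAdd (S.ρ w) (Multiplicative.toAdd (S.ρ v⁻¹) (S.lamv v)))
      (Finset.univ.filter (· ∈ S.WI I)), eL μ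

/-- The set `C^I := W^{Δ∖I} ∖ ⋃_{J ⊊ I} W^{Δ∖J}`. -/
def CI (S : WeylSetup r Λ₀ W) (I : Finset (Fin r)) : Set W :=
  S.Wmin Iᶜ \ ⋃ J ∈ {J : Finset (Fin r) | J ⊂ I}, S.Wmin Jᶜ

/-- The `ℤ[Λ]^W`-submodule (as a set) `R_I := Σ_{v ∈ C^I} ℤ[Λ]^W ⬝ f_v ⊆ ℤ[Λ]`, where
`f_v := f_v^{Δ∖I}` for `v ∈ C^I`. -/
def RI [Finite W] (S : WeylSetup r Λ₀ W) (I : Finset (Fin r)) : Set (GA r Λ₀) :=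
  {x : GA r Λ₀ | ∃ c : {v : W // v ∈ S.CI I} →₀ S.inv (Set.univ : Set W),
      x = c.sum fun v a => (a : GA r Λ₀) * S.steinberg Iᶜ v.1}

end WeylSetup

namespace RingHom

variable {R : Type*} [CommRing R] {σ : R →+* R}

def fixedAddMulSubring (hσ : Function.Involutive σ) (t : R) : Subring R where
  carrier := {z | ∃ a b, σ a = a ∧ σ b = b ∧ z = a + t * b}
  zero_mem' := ⟨0, 0, map_zero σ, map_zero σ, by ring⟩
  one_mem' := ⟨1, 0, map_one σ, map_zero σ, by ring⟩
  add_mem' := by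
    rintro _ _ ⟨a, b, ha, hb, rfl⟩ ⟨a', b', ha', hb', rfl⟩
    exact ⟨a + a', b + b', by rw [map_add, ha, ha'], by rw [map_add, hb, hb'], by ring⟩
  neg_mem' := by
    rintro _ ⟨a, b, ha, hb, rfl⟩
    exact ⟨-a, -b, by rw [map_neg, ha], by rw [map_neg, hb], by ring⟩
  mul_mem' := by
    rintro _ _ ⟨a, b, ha, hb, rfl⟩ ⟨a', b', ha', hb', rfl⟩
    refine ⟨a * a' - t * σ t * b * b', a * b' + a' * b + (t + σ t) * b * b', ?_, ?_, by ring⟩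
    · simp only [map_sub, map_mul, ha, ha', hb, hb', hσ t]
      ring
    · simp only [map_add, map_mul, ha, ha', hb, hb', hσ t]
      ring

variable {hσ : Function.Involutive σ} {t : R}

theorem mem_fixedAddMulSubring {z : R} :
    z ∈ fixedAddMulSubring hσ t ↔ ∃ a b, σ a = a ∧ σ b = b ∧ z = a + t * b :=
  Iff.rfl

theorem mem_fixedAddMulSubring_of_apply_eq {a : R} (ha : σ a = a) :
    a ∈ fixedAddMulSubring hσ t :=
  ⟨a, 0, ha, map_zero σ, by ring⟩

theorem self_mem_fixedAddMulSubring : t ∈ fixedAddMulSubring hσ t :=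
  ⟨0, 1, map_zero σ, map_one σ, by ring⟩

theorem mem_fixedAddMulSubring_of_mul_eq_one {t' : R} (h : t * t' = 1) :
    t' ∈ fixedAddMulSubring hσ t := by
  have hσ' : σ t * σ t' = 1 := by rw [← map_mul, h, map_one]
  refine ⟨t' * σ t' * (t + σ t), -(t' * σ t'), ?_, ?_, ?_⟩
  · simp only [map_mul, map_add, hσ t, hσ t']
    ring
  · simp only [map_neg, map_mul, hσ t']
    ring
  · linear_combination (-t') * hσ'

theorem eq_and_eq_of_add_mul_eq (ht : t - σ t ∈ nonZeroDivisors R) {a b a' b' : R}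
    (ha : σ a = a) (hb : σ b = b) (ha' : σ a' = a') (hb' : σ b' = b')
    (h : a + t * b = a' + t * b') : a = a' ∧ b = b' := by
  have hσh : a + σ t * b = a' + σ t * b' := by
    simpa only [map_add, map_mul, ha, hb, ha', hb'] using congrArg σ h
  have hb : b = b' := by
    rw [← sub_eq_zero]
    refine (mem_nonZeroDivisors_iff.mp ht).1 _ ?_
    linear_combination h - hσh
  exact ⟨by simpa [hb] using h, hb⟩

end RingHom

namespace AddMonoidAlgebra

theorem eq_zero_of_single_one_mul_eq_self {k G : Type*} [Semiring k] [AddCommGroup G] {g : G}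
    (hg : ¬IsOfFinAddOrder g) {x : AddMonoidAlgebra k G} (hx : single g 1 * x = x) : x = 0 := by
  by_contra hx0
  obtain ⟨y, hy⟩ := Finsupp.support_nonempty_iff.mpr (coeff_eq_zero.not.mpr hx0)
  have hcoeff : ∀ n : ℕ, x.coeff (y + n • g) = x.coeff y := by
    intro n
    induction n with
    | zero => simp
    | succ n ih =>
      calc x.coeff (y + (n + 1) • g) = (single g 1 * x).coeff (y + (n + 1) • g) := by rw [hx]
        _ = x.coeff (y + n • g) := by rw [coeff_single_mul_apply, one_mul, succ_nsmul]; abel_nf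
        _ = x.coeff y := ih
  have hinj : Function.Injective fun n : ℕ => y + n • g :=
    (add_right_injective y).comp (injective_nsmul_iff_not_isOfFinAddOrder.mpr hg)
  refine Set.infinite_of_injective_forall_mem hinj (fun n => ?_) x.coeff.support.finite_toSet
  rw [Finset.mem_coe, Finsupp.mem_support_iff, hcoeff]
  exact Finsupp.mem_support_iff.mp hy

theorem single_one_sub_one_mem_nonZeroDivisors {k G : Type*} [CommRing k] [AddCommGroup G]
    {g : G} (hg : ¬IsOfFinAddOrder g) :
    single g (1 : k) - 1 ∈ nonZeroDivisors (AddMonoidAlgebra k G) :=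
  mem_nonZeroDivisors_iff_right.mpr fun x hx =>
    eq_zero_of_single_one_mul_eq_self hg (by linear_combination hx)

theorem single_zsmul_one_mem {k G : Type*} [Ring k] [AddGroup G]
    {T : Subring (AddMonoidAlgebra k G)} {g : G} (hg : single g 1 ∈ T) (hg' : single (-g) 1 ∈ T)
    (n : ℤ) :
    single (n • g) (1 : k) ∈ T := by
  induction n using Int.induction_on with
  | zero => simpa only [zero_zsmul, ← one_def] using T.one_mem
  | succ n ih =>
    rw [add_zsmul, one_zsmul, ← mul_one (1 : k), ← single_mul_single]
    exact T.mul_mem ih hg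
  | pred n ih =>
    rw [sub_zsmul, one_zsmul, ← mul_one (1 : k), ← single_mul_single]
    exact T.mul_mem ih hg'

theorem subring_eq_top_of_forall_single_one_mem {G : Type*} [AddMonoid G]
    {T : Subring (AddMonoidAlgebra ℤ G)} (hT : ∀ g, single g 1 ∈ T) : T = ⊤ :=
  eq_top_iff.mpr fun x _ =>
    x.induction_on hT (fun _ _ => T.add_mem) (fun n _ hx => T.zsmul_mem hx n)

end AddMonoidAlgebra

namespace WeylSetup

variable {r : ℕ} {Λ₀ W : Type} [AddCommGroup Λ₀] [Group W] (S : WeylSetup r Λ₀ W)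

theorem eL_add (l l' : Lam r Λ₀) : eL (l + l') = eL l * eL l' := by
  simp only [eL, AddMonoidAlgebra.single_mul_single, mul_one]

theorem act_eL (w : W) (l : Lam r Λ₀) : S.act w (eL l) = eL (Multiplicative.toAdd (S.ρ w) l) :=
  AddMonoidAlgebra.mapDomain_single

theorem act_mul (w w' : W) (x : GA r Λ₀) : S.act (w * w') x = S.act w (S.act w' x) := by
  induction x using AddMonoidAlgebra.induction_on with
  | of l =>
    show S.act _ (eL l) = S.act w (S.act w' (eL l))
    rw [act_eL, act_eL, act_eL, map_mul]
    rfl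
  | add x y hx hy => rw [map_add, map_add, map_add, hx, hy]
  | smul n x hx => rw [map_zsmul, map_zsmul, map_zsmul, hx]

theorem act_one (x : GA r Λ₀) : S.act 1 x = x := by
  induction x using AddMonoidAlgebra.induction_on with
  | of l =>
    show S.act _ (eL l) = eL l
    rw [act_eL, map_one]
    rfl
  | add x y hx hy => rw [map_add, hx, hy]
  | smul n x hx => rw [map_zsmul, hx]

theorem mem_inv_closure_singleton_iff {s : W} {x : GA r Λ₀} :
    x ∈ S.inv (Subgroup.closure {s} : Set W) ↔ S.act s x = x := by
  refine ⟨fun h => h s (Subgroup.subset_closure rfl), fun h w hw => ?_⟩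
  induction hw using Subgroup.closure_induction with
  | mem w hw => rwa [Set.mem_singleton_iff.mp hw]
  | one => exact S.act_one x
  | mul w w' _ _ hw hw' => rw [act_mul, hw', hw]
  | inv w _ hw => conv_lhs => rw [← hw, ← act_mul, inv_mul_cancel, act_one]

theorem act_simple_involutive (i : Fin r) : Function.Involutive (S.act (S.cs.simple i)) :=
  fun x => by rw [← act_mul, S.cs.simple_mul_simple_self, act_one]

theorem act_simple_eL (i : Fin r) (l : Lam r Λ₀) :
    S.act (S.cs.simple i) (eL l) = eL (l.1, l.2 - l.2 i • S.α i) := by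
  rw [act_eL, ρ_simple]

theorem fixedAddMulSubring_act_simple_eq_top (i : Fin r) :
    RingHom.fixedAddMulSubring (S.act_simple_involutive i) (eL (omega r Λ₀ i)) = ⊤ := by
  set M := RingHom.fixedAddMulSubring (S.act_simple_involutive i) (eL (omega r Λ₀ i))
  have hω : ∀ n : ℤ, eL (n • omega r Λ₀ i) ∈ M :=
    AddMonoidAlgebra.single_zsmul_one_mem RingHom.self_mem_fixedAddMulSubring
      (RingHom.mem_fixedAddMulSubring_of_mul_eq_one
        (show eL _ * eL _ = 1 by rw [← eL_add, add_neg_cancel]; rfl))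
  refine AddMonoidAlgebra.subring_eq_top_of_forall_single_one_mem fun l => ?_
  have hl : l = (l - l.2 i • omega r Λ₀ i) + l.2 i • omega r Λ₀ i := by abel
  rw [← eL, hl, eL_add]
  refine M.mul_mem (RingHom.mem_fixedAddMulSubring_of_apply_eq ?_) (hω _)
  rw [act_simple_eL]
  congr 1
  ext <;> simp [omega]

theorem sub_act_simple_mem_nonZeroDivisors (i : Fin r) :
    eL (omega r Λ₀ i) - S.act (S.cs.simple i) (eL (omega r Λ₀ i)) ∈
      nonZeroDivisors (GA r Λ₀) := by
  set β : Lam r Λ₀ := (0, S.α i)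
  set μ : Lam r Λ₀ := omega r Λ₀ i - β
  have hβ : ¬IsOfFinAddOrder β := by
    rw [isOfFinAddOrder_iff_nsmul_eq_zero]
    rintro ⟨n, hn, hnβ⟩
    exact hn.ne' (by simpa [β, S.α_self i] using congrArg (fun l : Lam r Λ₀ => l.2 i) hnβ)
  have hμ : IsUnit (eL μ) := IsUnit.of_mul_eq_one (eL (-μ)) (by rw [← eL_add, add_neg_cancel]; rfl)
  have hsplit : eL (omega r Λ₀ i) - S.act (S.cs.simple i) (eL (omega r Λ₀ i)) =
      eL μ * (eL β - 1) := by
    rw [act_simple_eL, mul_sub, ← eL_add, mul_one]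
    simp [μ, β, omega]
  rw [hsplit]
  exact mul_mem_nonZeroDivisors.mpr
    ⟨hμ.mem_nonZeroDivisors, AddMonoidAlgebra.single_one_sub_one_mem_nonZeroDivisors hβ⟩

end WeylSetup

theorem stmt4_general {r : ℕ} {Λ₀ W : Type} [AddCommGroup Λ₀] [Group W]
    (S : WeylSetup r Λ₀ W) (i : Fin r) :
    ∀ x : GA r Λ₀,
      ∃! p : (S.inv (Subgroup.closure {S.cs.simple i} : Set W)) ×
          (S.inv (Subgroup.closure {S.cs.simple i} : Set W)),
        x = (p.1 : GA r Λ₀) + eL (omega r Λ₀ i) * (p.2 : GA r Λ₀) := by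
  intro x
  obtain ⟨a, b, ha, hb, hx⟩ := RingHom.mem_fixedAddMulSubring.mp
    (S.fixedAddMulSubring_act_simple_eq_top i ▸ Subring.mem_top x)
  refine ⟨(⟨a, S.mem_inv_closure_singleton_iff.mpr ha⟩,
    ⟨b, S.mem_inv_closure_singleton_iff.mpr hb⟩), hx, ?_⟩
  rintro ⟨⟨a', ha'⟩, ⟨b', hb'⟩⟩ hx'
  obtain ⟨rfl, rfl⟩ := RingHom.eq_and_eq_of_add_mul_eq (S.sub_act_simple_mem_nonZeroDivisors i)
    (S.mem_inv_closure_singleton_iff.mp ha') (S.mem_inv_closure_singleton_iff.mp hb') ha hb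
    (hx'.symm.trans hx)
  rfl

/-- For each `i ∈ {1,…,r}`, the group algebra `ℤ[Λ]` decomposes as the
internal direct sum `ℤ[Λ] = ℤ[Λ]^{⟨s_i⟩} ⊕ e^{ω_i} · ℤ[Λ]^{⟨s_i⟩}` of
`ℤ[Λ]^{⟨s_i⟩}`-submodules: every element of `ℤ[Λ]` is uniquely of the form
`a + e^{ω_i} b` with `a, b ∈ ℤ[Λ]^{⟨s_i⟩}`. -/
theorem stmt4 {r : ℕ} {Λ₀ W : Type} [AddCommGroup Λ₀] [Module.Free ℤ Λ₀]
    [Module.Finite ℤ Λ₀] [Group W] [Finite W]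
    (S : WeylSetup r Λ₀ W) (i : Fin r) :
    ∀ x : GA r Λ₀,
      ∃! p : (S.inv (Subgroup.closure {S.cs.simple i} : Set W)) ×
          (S.inv (Subgroup.closure {S.cs.simple i} : Set W)),
        x = (p.1 : GA r Λ₀) + eL (omega r Λ₀ i) * (p.2 : GA r Λ₀) :=
  stmt4_general S i
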